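/- Let n be a positive integer. For all x, y ∈ ℂ^{n²}, Σ_{q=0}^{n−1} Σ_{q'=0}^{n−1} | x* A_{q'}* A_q y |² ≤ n · ‖x‖₀ · ‖x‖₂² · ‖y‖₂², where ‖x‖₀ is the number of nonzero entries of x. -/

import Mathlib

open MeasureTheory ProbabilityTheory Matrix

noncomputable section

/-- Cyclic translation on `ℂⁿ`: `(T h) q = h (q-1)`. -/
def Tmat (n : ℕ) : Matrix (Fin n) (Fin n) ℂ :=
  fun q j => if (j : ℕ) = ((q : ℕ) + (n - 1)) % n then 1 else 0

/-- Modulation on `ℂⁿ`: `(M h) q = exp(2πiq/n) h q`. -/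
def Mmat (n : ℕ) : Matrix (Fin n) (Fin n) ℂ :=
  Matrix.diagonal fun q => Complex.exp (2 * Real.pi * Complex.I * (q : ℕ) / n)

/-- Time-frequency shift `π(λ) = M^ℓ T^k` for `λ = (k, ℓ)`. -/
def pimat (n : ℕ) (lam : Fin n × Fin n) : Matrix (Fin n) (Fin n) ℂ :=
  Mmat n ^ (lam.2 : ℕ) * Tmat n ^ (lam.1 : ℕ)

/-- The matrix `A_q = (T^q | M T^q | ⋯ | M^{n-1} T^q)`: its column `λ = (k,ℓ)` is
the `k`-th column of `M^ℓ T^q`. -/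
def Amat (n : ℕ) (q : Fin n) : Matrix (Fin n) (Fin n × Fin n) ℂ :=
  fun r lam => (Mmat n ^ (lam.2 : ℕ) * Tmat n ^ (q : ℕ)) r lam.1

/-- The matrix `W_{q',q} = A_{q'}^* A_q` for `q' ≠ q`, and `0` for `q' = q`. -/
def Wmat (n : ℕ) (q' q : Fin n) : Matrix (Fin n × Fin n) (Fin n × Fin n) ℂ :=
  if q' = q then 0 else (Amat n q')ᴴ * Amat n q

/-- The matrix `B(x)` with entries `B(x)_{q',q} = x^* W_{q',q} x`. -/
def Bmat (n : ℕ) (x : Fin n × Fin n → ℂ) : Matrix (Fin n) (Fin n) ℂ :=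
  fun q' q => star x ⬝ᵥ (Wmat n q' q).mulVec x

/-- Euclidean (`ℓ₂`) norm of a finitely supported complex vector. -/
def euclNorm {ι : Type*} [Fintype ι] (x : ι → ℂ) : ℝ :=
  Real.sqrt (∑ i, ‖x i‖ ^ 2)

/-- Frobenius norm of a matrix. -/
def frobNorm {ι κ : Type*} [Fintype ι] [Fintype κ] (A : Matrix ι κ ℂ) : ℝ :=
  Real.sqrt (∑ i, ∑ j, ‖A i j‖ ^ 2)

/-- Operator (`ℓ₂ → ℓ₂`) norm of a matrix. -/
def opNorm {ι κ : Type*} [Fintype ι] [Fintype κ] (A : Matrix ι κ ℂ) : ℝ :=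
  sSup {c : ℝ | ∃ x : κ → ℂ, euclNorm x ≤ 1 ∧ c = euclNorm (A.mulVec x)}

open scoped Classical in
/-- Number of nonzero entries of a vector. -/
def sparsity {ι : Type*} [Fintype ι] (x : ι → ℂ) : ℕ :=
  (Finset.univ.filter fun j => x j ≠ 0).card

/-- `T_s`: unit-norm `s`-sparse vectors in `ℂ^{n²}`. -/
def sparseSphere (n s : ℕ) : Set (Fin n × Fin n → ℂ) :=
  {x | euclNorm x = 1 ∧ sparsity x ≤ s}

/-- Covering number: minimal cardinality of a subset `S ⊆ T` such that every point of `T`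
is within distance `u` (w.r.t. `d`) of a point of `S`. -/
def coveringNumber {α : Type*} (T : Set α) (d : α → α → ℝ) (u : ℝ) : ℝ :=
  sInf {N : ℝ | ∃ S : Finset α, ↑S ⊆ T ∧ (∀ x ∈ T, ∃ y ∈ S, d x y ≤ u) ∧ N = S.card}

/-- Restricted isometry constant of order `s` of the matrix `A`. -/
def ripConst {ι κ : Type*} [Fintype ι] [Fintype κ] (A : Matrix ι κ ℂ) (s : ℕ) : ℝ :=
  sInf {δ : ℝ | 0 ≤ δ ∧ ∀ x : κ → ℂ, sparsity x ≤ s →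
    (1 - δ) * euclNorm x ^ 2 ≤ euclNorm (A.mulVec x) ^ 2 ∧
      euclNorm (A.mulVec x) ^ 2 ≤ (1 + δ) * euclNorm x ^ 2}

/-- Gabor synthesis matrix: the column indexed by `λ` is `π(λ) g`. -/
def gaborMatrix (n : ℕ) (g : Fin n → ℂ) : Matrix (Fin n) (Fin n × Fin n) ℂ :=
  fun r lam => (pimat n lam).mulVec g r

/-- The Rademacher distribution on `ℂ`: values `±1` with probability `1/2` each. -/
def rademacherMeasure : Measure ℂ :=
  (2 : ENNReal)⁻¹ • (Measure.dirac 1 + Measure.dirac (-1))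

/-- The Steinhaus distribution: uniform distribution on the complex unit circle. -/
def steinhausMeasure : Measure ℂ :=
  Measure.map (fun t : ℝ => Complex.exp (2 * Real.pi * t * Complex.I))
    (volume.restrict (Set.Ioc (0 : ℝ) 1))

/-- `ε` is a Rademacher sequence: independent entries, each `±1` with probability 1/2. -/
def IsRademacherVec {Ω : Type*} [MeasurableSpace Ω] (μ : Measure Ω) {n : ℕ}
    (ε : Ω → Fin n → ℂ) : Prop :=
  iIndepFun (fun q ω => ε ω q) μ ∧
    ∀ q, μ.map (fun ω => ε ω q) = rademacherMeasure

/-- `ε` is a Steinhaus sequence: independent entries, each uniform on the unit circle. -/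
def IsSteinhausVec {Ω : Type*} [MeasurableSpace Ω] (μ : Measure Ω) {n : ℕ}
    (ε : Ω → Fin n → ℂ) : Prop :=
  iIndepFun (fun q ω => ε ω q) μ ∧
    ∀ q, μ.map (fun ω => ε ω q) = steinhausMeasure

end

/-!
Put `v_q = A_q y`. The column `(k, ℓ)` of `A_{q'}` is supported on the single row `k + q'`, with
an entry of modulus one, so `|(A_{q'}^* v_q)_{(k,ℓ)}| = |v_q(k + q')|`. Cauchy–Schwarz on the
support `S` of `x` bounds `|x^* A_{q'}^* v_q|²` by `‖x‖² ∑_{(k,ℓ) ∈ S} |v_q(k + q')|²`; summing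
over `q'` turns this into `‖x‖² |S| ‖v_q‖²`, and `∑_q ‖A_q y‖² = n ‖y‖²` is Parseval's identity
for the discrete Fourier transform in the variable `ℓ`.
-/

open ComplexConjugate Finset

namespace IsPrimitiveRoot

variable {n : ℕ} {ζ : ℂ}

lemma conj_pow_eq_inv [NeZero n] (hζ : IsPrimitiveRoot ζ n) (m : ℕ) :
    conj (ζ ^ m) = (ζ ^ m)⁻¹ :=
  (Complex.inv_eq_conj (by rw [norm_pow, hζ.norm'_eq_one (NeZero.ne n), one_pow])).symm

lemma sum_pow_mul_conj_pow (hζ : IsPrimitiveRoot ζ n) (ℓ ℓ' : Fin n) :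
    ∑ r : Fin n, ζ ^ ((r : ℕ) * ℓ) * conj (ζ ^ ((r : ℕ) * ℓ')) =
      if ℓ = ℓ' then (n : ℂ) else 0 := by
  have : NeZero n := ⟨ℓ.pos.ne'⟩
  have hζ0 : ζ ≠ 0 := hζ.ne_zero (NeZero.ne n)
  set μ := ζ ^ (ℓ : ℕ) * (ζ ^ (ℓ' : ℕ))⁻¹
  have hterm (r : Fin n) : ζ ^ ((r : ℕ) * ℓ) * conj (ζ ^ ((r : ℕ) * ℓ')) = μ ^ (r : ℕ) := by
    rw [hζ.conj_pow_eq_inv, mul_comm (r : ℕ), mul_comm (r : ℕ), pow_mul, pow_mul, ← inv_pow,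
      ← mul_pow]
  rw [Fintype.sum_congr _ _ hterm, Fin.sum_univ_eq_sum_range (μ ^ ·)]
  split_ifs with h
  · simp [μ, h, hζ0]
  · have hμ1 : μ ≠ 1 := fun h1 =>
      h (Fin.ext (hζ.pow_inj ℓ.2 ℓ'.2 ((mul_inv_eq_one₀ (pow_ne_zero _ hζ0)).1 h1)))
    have hμn : μ ^ n = 1 := by
      rw [mul_pow, inv_pow, pow_right_comm ζ (ℓ : ℕ), pow_right_comm ζ (ℓ' : ℕ), hζ.pow_eq_one,
        one_pow, one_pow, inv_one, mul_one]
    rw [geom_sum_eq hμ1, hμn, sub_self, zero_div]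

lemma sum_norm_sq_sum_pow_mul (hζ : IsPrimitiveRoot ζ n) (c : Fin n → ℂ) :
    ∑ r : Fin n, ‖∑ ℓ : Fin n, ζ ^ ((r : ℕ) * ℓ) * c ℓ‖ ^ 2 = n * ∑ ℓ, ‖c ℓ‖ ^ 2 := by
  have key : ∑ r : Fin n, (∑ ℓ : Fin n, ζ ^ ((r : ℕ) * ℓ) * c ℓ) *
      conj (∑ ℓ : Fin n, ζ ^ ((r : ℕ) * ℓ) * c ℓ) = n * ∑ ℓ, c ℓ * conj (c ℓ) := by
    calc _ = ∑ ℓ, ∑ ℓ', c ℓ * conj (c ℓ') *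
          ∑ r : Fin n, ζ ^ ((r : ℕ) * ℓ) * conj (ζ ^ ((r : ℕ) * ℓ')) := by
          simp_rw [map_sum, map_mul, sum_mul_sum, mul_sum]
          rw [sum_comm]
          refine sum_congr rfl fun ℓ _ => ?_
          rw [sum_comm]
          refine sum_congr rfl fun ℓ' _ => sum_congr rfl fun r _ => by ring
      _ = _ := by
          simp_rw [hζ.sum_pow_mul_conj_pow, mul_ite, mul_zero, sum_ite_eq, mem_univ, if_true,
            mul_sum, mul_comm]
  simp_rw [Complex.mul_conj'] at key
  exact_mod_cast key

end IsPrimitiveRoot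

lemma euclNorm_sq {ι : Type*} [Fintype ι] (x : ι → ℂ) : euclNorm x ^ 2 = ∑ i, ‖x i‖ ^ 2 :=
  Real.sq_sqrt (sum_nonneg fun _ _ => sq_nonneg _)

lemma norm_star_dotProduct_sq_le {ι : Type*} [Fintype ι] (s : Finset ι) {x : ι → ℂ}
    (hx : ∀ i ∉ s, x i = 0) (w : ι → ℂ) :
    ‖star x ⬝ᵥ w‖ ^ 2 ≤ (∑ i, ‖x i‖ ^ 2) * ∑ i ∈ s, ‖w i‖ ^ 2 := by
  have hsum : star x ⬝ᵥ w = ∑ i ∈ s, star (x i) * w i :=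
    (sum_subset (subset_univ s) fun i _ hi => by simp [hx i hi]).symm
  calc ‖star x ⬝ᵥ w‖ ^ 2 ≤ (∑ i ∈ s, ‖x i‖ * ‖w i‖) ^ 2 := by
        rw [hsum]
        gcongr
        exact (norm_sum_le _ _).trans_eq (by simp)
    _ ≤ (∑ i ∈ s, ‖x i‖ ^ 2) * ∑ i ∈ s, ‖w i‖ ^ 2 := sum_mul_sq_le_sq_mul_sq _ _ _
    _ ≤ (∑ i, ‖x i‖ ^ 2) * ∑ i ∈ s, ‖w i‖ ^ 2 := by
        gcongr
        exact subset_univ s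

noncomputable def unitRoot (n : ℕ) : ℂ := Complex.exp (2 * Real.pi * Complex.I / n)

lemma isPrimitiveRoot_unitRoot {n : ℕ} (hn : n ≠ 0) : IsPrimitiveRoot (unitRoot n) n :=
  Complex.isPrimitiveRoot_exp n hn

lemma Mmat_eq_diagonal (n : ℕ) : Mmat n = diagonal fun r : Fin n => unitRoot n ^ (r : ℕ) := by
  refine congrArg diagonal (funext fun r => ?_)
  rw [unitRoot, ← Complex.exp_nat_mul]
  ring_nf

section

open Fin.NatCast

variable {n : ℕ} [NeZero n]

lemma Tmat_apply (q j : Fin n) : Tmat n q j = if j = q - 1 then 1 else 0 := by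
  obtain ⟨m, rfl⟩ : ∃ m, n = m + 1 := Nat.exists_eq_succ_of_ne_zero (NeZero.ne n)
  have hval : ((q : ℕ) + (m + 1 - 1)) % (m + 1) = ((q - 1 : Fin (m + 1)) : ℕ) := by
    rw [Fin.coe_sub_one, Nat.add_sub_cancel]
    split_ifs with hq
    · simp [hq]
    · have : (q : ℕ) ≠ 0 := fun h => hq (Fin.ext h)
      rw [show (q : ℕ) + m = (q - 1) + (m + 1) by omega, Nat.add_mod_right,
        Nat.mod_eq_of_lt (by omega)]
  simp only [Tmat, hval, Fin.val_inj]

lemma Tmat_pow_apply (m : ℕ) (r j : Fin n) :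
    (Tmat n ^ m) r j = if j = r - (m : Fin n) then 1 else 0 := by
  induction m generalizing j with
  | zero => simp [one_apply, eq_comm]
  | succ m ih =>
    simp only [pow_succ, mul_apply, ih, Tmat_apply, ite_mul, one_mul, zero_mul, sum_ite_eq',
      mem_univ, if_true, Nat.cast_succ, sub_sub]

lemma Amat_apply (q r : Fin n) (p : Fin n × Fin n) :
    Amat n q r p = if p.1 = r - q then unitRoot n ^ ((r : ℕ) * p.2) else 0 := by
  simp [Amat, Mmat_eq_diagonal, diagonal_pow, diagonal_mul, Tmat_pow_apply, pow_mul]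

lemma Amat_mulVec_apply (q : Fin n) (y : Fin n × Fin n → ℂ) (r : Fin n) :
    (Amat n q *ᵥ y) r = ∑ ℓ : Fin n, unitRoot n ^ ((r : ℕ) * ℓ) * y (r - q, ℓ) := by
  simp [mulVec, dotProduct, Fintype.sum_prod_type, Amat_apply, ite_mul]

lemma norm_conjTranspose_Amat_mulVec_apply (q : Fin n) (v : Fin n → ℂ) (p : Fin n × Fin n) :
    ‖((Amat n q)ᴴ *ᵥ v) p‖ = ‖v (p.1 + q)‖ := by
  simp [mulVec, dotProduct, Amat_apply, eq_sub_iff_add_eq, eq_comm, apply_ite (starRingEnd ℂ),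
    ite_mul, (isPrimitiveRoot_unitRoot (NeZero.ne n)).norm'_eq_one (NeZero.ne n)]

lemma sum_sum_norm_sq_Amat_mulVec (y : Fin n × Fin n → ℂ) :
    ∑ q : Fin n, ∑ r, ‖(Amat n q *ᵥ y) r‖ ^ 2 = n * ∑ p, ‖y p‖ ^ 2 := by
  have hreindex (r : Fin n) : ∑ q : Fin n, ‖(Amat n q *ᵥ y) r‖ ^ 2 =
      ∑ k : Fin n, ‖∑ ℓ : Fin n, unitRoot n ^ ((r : ℕ) * ℓ) * y (k, ℓ)‖ ^ 2 := by
    simp_rw [Amat_mulVec_apply]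
    exact (Equiv.subLeft r).sum_comp
      fun k => ‖∑ ℓ : Fin n, unitRoot n ^ ((r : ℕ) * ℓ) * y (k, ℓ)‖ ^ 2
  rw [sum_comm, Fintype.sum_congr _ _ hreindex, sum_comm, Fintype.sum_prod_type, mul_sum]
  exact sum_congr rfl fun k _ =>
    (isPrimitiveRoot_unitRoot (NeZero.ne n)).sum_norm_sq_sum_pow_mul fun ℓ => y (k, ℓ)

end

/-- `∑_{q,q'} |x^* A_{q'}^* A_q y|² ≤ n ‖x‖₀ ‖x‖₂² ‖y‖₂²` (Lemma 6, eq. (19)). -/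
theorem sum_sq_inner_le (n : ℕ) (hn : 0 < n) (x y : Fin n × Fin n → ℂ) :
    ∑ q : Fin n, ∑ q' : Fin n,
        ‖star x ⬝ᵥ ((Amat n q')ᴴ * Amat n q).mulVec y‖ ^ 2 ≤
      (n : ℝ) * (sparsity x : ℝ) * euclNorm x ^ 2 * euclNorm y ^ 2 := by
  classical
  have : NeZero n := ⟨hn.ne'⟩
  set S := univ.filter fun p => x p ≠ 0
  have hS : ∀ p ∉ S, x p = 0 := by simp [S]
  have hshift (q k : Fin n) :
      ∑ q', ‖(Amat n q *ᵥ y) (k + q')‖ ^ 2 = ∑ r, ‖(Amat n q *ᵥ y) r‖ ^ 2 :=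
    Equiv.sum_comp (Equiv.addLeft k) fun r => ‖(Amat n q *ᵥ y) r‖ ^ 2
  calc ∑ q : Fin n, ∑ q' : Fin n, ‖star x ⬝ᵥ ((Amat n q')ᴴ * Amat n q) *ᵥ y‖ ^ 2
      ≤ ∑ q : Fin n, ∑ q' : Fin n,
          (∑ p, ‖x p‖ ^ 2) * ∑ p ∈ S, ‖(Amat n q *ᵥ y) (p.1 + q')‖ ^ 2 := by
        gcongr with q _ q' _
        rw [← mulVec_mulVec]
        refine (norm_star_dotProduct_sq_le S hS _).trans_eq ?_
        simp_rw [norm_conjTranspose_Amat_mulVec_apply]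
    _ = (∑ p, ‖x p‖ ^ 2) *
          ∑ p ∈ S, ∑ q : Fin n, ∑ q', ‖(Amat n q *ᵥ y) (p.1 + q')‖ ^ 2 := by
        simp_rw [← mul_sum]
        exact congrArg _ ((sum_congr rfl fun q _ => sum_comm).trans sum_comm)
    _ = (∑ p, ‖x p‖ ^ 2) * ∑ p ∈ S, ∑ q : Fin n, ∑ r, ‖(Amat n q *ᵥ y) r‖ ^ 2 := by
        simp_rw [hshift]
    _ = _ := by
        rw [sum_const, sum_sum_norm_sq_Amat_mulVec, euclNorm_sq, euclNorm_sq, sparsity]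
        simp only [nsmul_eq_mul]
        ring
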